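/- For every prime p, Σ_{k=1}^{p-1} ⌊k^7/p⌋ = (1/24)·(p-2)(p-1)(p+1)(3p^4 - 6p^3 + 5p^2 - 2p + 6). -/

import Mathlib

/-!
For odd `n` and `0 < k < p`, the residues of `k ^ n` and `(p - k) ^ n` modulo `p` are nonzero and
sum to a multiple of `p`, hence to exactly `p`. So the residues of `k ^ n` for `1 ≤ k ≤ p - 1`
sum to `(p - 1) p / 2`, and dividing `∑ k ^ n = p ∑ ⌊k ^ n / p⌋ + ∑ (k ^ n mod p)` by `p` reduces
the theorem to Faulhaber's formula for `∑ k ^ 7`.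
-/

open Finset

theorem Nat.mod_add_mod_eq_self_of_dvd_add {a b c : ℕ} (h : c ∣ a + b) (ha : ¬c ∣ a) :
    a % c + b % c = c := by
  rw [← Nat.add_mod_add_of_le_add_mod (Nat.le_mod_add_mod_of_dvd_add_of_not_dvd h ha),
    Nat.mod_eq_zero_of_dvd h, zero_add]

theorem Nat.Prime.pow_mod_add_sub_pow_mod {p n k : ℕ} (hp : p.Prime) (hn : Odd n) (hk : 0 < k)
    (hkp : k < p) : k ^ n % p + (p - k) ^ n % p = p := by
  apply Nat.mod_add_mod_eq_self_of_dvd_add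
  · simpa [Nat.add_sub_cancel' hkp.le] using Odd.nat_add_dvd_pow_add_pow k (p - k) hn
  · intro hdvd
    exact absurd (Nat.le_of_dvd hk (hp.dvd_of_dvd_pow hdvd)) hkp.not_ge

theorem Nat.Prime.two_mul_sum_pow_mod {p n : ℕ} (hp : p.Prime) (hn : Odd n) :
    2 * ∑ k ∈ Icc 1 (p - 1), k ^ n % p = (p - 1) * p := by
  have reflect : ∑ k ∈ Icc 1 (p - 1), (p - k) ^ n % p = ∑ k ∈ Icc 1 (p - 1), k ^ n % p := by
    refine sum_nbij' (p - ·) (p - ·) ?_ ?_ ?_ ?_ fun _ _ => rfl <;>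
      intro k hk <;> simp only [mem_Icc] at hk ⊢ <;> omega
  calc 2 * ∑ k ∈ Icc 1 (p - 1), k ^ n % p
      = ∑ k ∈ Icc 1 (p - 1), (k ^ n % p + (p - k) ^ n % p) := by
        rw [sum_add_distrib, reflect, two_mul]
    _ = ∑ _k ∈ Icc 1 (p - 1), p := by
        refine sum_congr rfl fun k hk => ?_
        rw [mem_Icc] at hk
        exact hp.pow_mod_add_sub_pow_mod hn hk.1 (by omega)
    _ = (p - 1) * p := by simp

theorem Nat.Prime.sum_floor_pow_div {p n : ℕ} (hp : p.Prime) (hn : Odd n) :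
    (∑ k ∈ Icc 1 (p - 1), (⌊(k : ℚ) ^ n / p⌋ : ℚ)) =
      (∑ k ∈ Icc 1 (p - 1), (k : ℚ) ^ n) / p - ((p : ℚ) - 1) / 2 := by
  have floor_eq (k : ℕ) : (⌊(k : ℚ) ^ n / p⌋ : ℚ) = ((k ^ n / p : ℕ) : ℚ) := by
    rw [← Nat.cast_pow, Rat.floor_natCast_div_natCast]
    norm_cast
  have div_add_mod : p * ∑ k ∈ Icc 1 (p - 1), k ^ n / p + ∑ k ∈ Icc 1 (p - 1), k ^ n % p =
      ∑ k ∈ Icc 1 (p - 1), k ^ n := by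
    rw [mul_sum, ← sum_add_distrib]
    exact sum_congr rfl fun k _ => Nat.div_add_mod _ _
  have key : 2 * p * ∑ k ∈ Icc 1 (p - 1), k ^ n / p + (p - 1) * p =
      2 * ∑ k ∈ Icc 1 (p - 1), k ^ n := by
    rw [← hp.two_mul_sum_pow_mod hn, ← div_add_mod]
    ring
  have keyℚ := congrArg (Nat.cast : ℕ → ℚ) key
  push_cast [Nat.cast_sub hp.one_le] at keyℚ
  simp only [floor_eq]
  have hp0 : (p : ℚ) ≠ 0 := by exact_mod_cast hp.ne_zero
  field_simp
  linarith

theorem sum_Icc_pow_seven (n : ℕ) :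
    ∑ k ∈ Icc 1 n, (k : ℚ) ^ 7 =
      (n : ℚ) ^ 2 * ((n : ℚ) + 1) ^ 2 * (3 * (n : ℚ) ^ 4 + 6 * (n : ℚ) ^ 3 - (n : ℚ) ^ 2 - 4 * n + 2)
        / 24 := by
  induction n with
  | zero => simp
  | succ m ih =>
    rw [sum_Icc_succ_top (by omega), ih]
    push_cast
    ring

theorem stmt_10 (p : ℕ) (hp : p.Prime) :
    (∑ k ∈ Finset.Icc 1 (p - 1), (⌊((k : ℚ) ^ 7) / p⌋ : ℚ)) =
      (1 / 24) * ((p : ℚ) - 2) * ((p : ℚ) - 1) * ((p : ℚ) + 1) *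
        (3 * (p : ℚ) ^ 4 - 6 * (p : ℚ) ^ 3 + 5 * (p : ℚ) ^ 2 - 2 * p + 6) := by
  rw [hp.sum_floor_pow_div (by decide), sum_Icc_pow_seven, Nat.cast_sub hp.one_le, Nat.cast_one]
  have hp0 : (p : ℚ) ≠ 0 := by exact_mod_cast hp.ne_zero
  field_simp
  ring
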